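/- arXiv:2409.18720 — 3 statements merged into one kernel-verified Lean document; each statement's English description precedes it below -/
import Mathlib

section
/- Discrete Hardy inequality: let r > 0, z > 1 and x_k > 0 for k ∈ ℕ. Then there exists a constant C = C(r, z) such that ∑_{k=0}^∞ z^k (∑_{m=k}^∞ x_m)^r ≤ C ∑_{k=0}^∞ z^k x_k^r, whenever the right-hand side is finite. -/
/-!
Fix `1 < u < z`. For a single sequence, `(∑ a_m)^r ≤ A ∑ u^m a_m^r`: for `r ≤ 1` this is
subadditivity of `t ↦ t^r` (with `A = 1`), for `r > 1` it is Hölder's inequality against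
geometric weights. Applied to the tails `a_m = x_{k+m}` and summed against `z^k`, exchanging the
order of summation gives `∑_k z^k (∑_m x_{k+m})^r ≤ A ∑_m (u/z)^m ∑_n z^n x_n^r`, and the
geometric series in `u/z` converges.
-/

open scoped ENNReal

namespace ENNReal

variable {ι : Type*}

lemma rpow_tsum_le_of_forall_finset_sum {f : ι → ℝ≥0∞} {p : ℝ} {B : ℝ≥0∞}
    (h : ∀ s : Finset ι, (∑ i ∈ s, f i) ^ p ≤ B) : (∑' i, f i) ^ p ≤ B :=
  le_of_tendsto' ((continuous_rpow_const.tendsto _).comp ENNReal.summable.hasSum) h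

lemma rpow_tsum_le_tsum_rpow (f : ι → ℝ≥0∞) {p : ℝ} (hp₀ : 0 < p) (hp₁ : p ≤ 1) :
    (∑' i, f i) ^ p ≤ ∑' i, f i ^ p := by
  refine rpow_tsum_le_of_forall_finset_sum fun s => ?_
  refine le_trans ?_ (ENNReal.sum_le_tsum s)
  induction s using Finset.cons_induction with
  | empty => simp [zero_rpow_of_pos hp₀]
  | cons a s ha ih =>
    rw [Finset.sum_cons, Finset.sum_cons]
    exact (rpow_add_le_add_rpow _ _ hp₀.le hp₁).trans (add_le_add le_rfl ih)

lemma rpow_tsum_mul_le (w f : ι → ℝ≥0∞) {p : ℝ} (hp : 1 ≤ p) :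
    (∑' i, w i * f i) ^ p ≤ (∑' i, w i) ^ (p - 1) * ∑' i, w i * f i ^ p := by
  have hp₀ : 0 < p := zero_lt_one.trans_le hp
  refine rpow_tsum_le_of_forall_finset_sum fun s => ?_
  calc (∑ i ∈ s, w i * f i) ^ p
      ≤ ((∑ i ∈ s, w i) ^ (1 - p⁻¹) * (∑ i ∈ s, w i * f i ^ p) ^ p⁻¹) ^ p :=
        rpow_le_rpow (inner_le_weight_mul_Lp_of_nonneg s hp w f) hp₀.le
    _ = (∑ i ∈ s, w i) ^ (p - 1) * ∑ i ∈ s, w i * f i ^ p := by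
        rw [mul_rpow_of_nonneg _ _ hp₀.le, ← rpow_mul, ← rpow_mul, sub_mul, one_mul,
          inv_mul_cancel₀ hp₀.ne', rpow_one]
    _ ≤ (∑' i, w i) ^ (p - 1) * ∑' i, w i * f i ^ p := by
        gcongr <;> exact ENNReal.sum_le_tsum s

lemma exists_rpow_tsum_le_mul_tsum_pow_mul_rpow {r : ℝ} (hr : 0 < r) {u : ℝ≥0∞} (hu : 1 < u)
    (hu' : u ≠ ⊤) :
    ∃ A : ℝ≥0∞, A ≠ ⊤ ∧ ∀ a : ℕ → ℝ≥0∞, (∑' m, a m) ^ r ≤ A * ∑' m, u ^ m * a m ^ r := by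
  rcases le_or_gt r 1 with hr₁ | hr₁
  · refine ⟨1, one_ne_top, fun a => ?_⟩
    calc (∑' m, a m) ^ r ≤ ∑' m, a m ^ r := rpow_tsum_le_tsum_rpow a hr hr₁
      _ ≤ 1 * ∑' m, u ^ m * a m ^ r := by
        rw [one_mul]
        exact ENNReal.tsum_le_tsum fun m => le_mul_of_one_le_left' (one_le_pow₀ hu.le)
  · -- Hölder against the weights `s⁻¹ ^ m`, where `s ^ (r - 1) = u`.
    have hr₁' : 0 < r - 1 := sub_pos.2 hr₁
    set s := u ^ (r - 1)⁻¹
    have hs₁ : 1 < s := one_lt_rpow hu (inv_pos.2 hr₁')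
    have hs₀ : s ≠ 0 := (zero_lt_one.trans hs₁).ne'
    have hs_top : s ≠ ⊤ := rpow_ne_top_of_nonneg (inv_pos.2 hr₁').le hu'
    have hgeom : ∑' m : ℕ, s⁻¹ ^ m ≠ ⊤ := (tsum_geometric_lt_top.2 (ENNReal.inv_lt_one.2 hs₁)).ne
    refine ⟨(∑' m : ℕ, s⁻¹ ^ m) ^ (r - 1), rpow_ne_top_of_nonneg hr₁'.le hgeom, fun a => ?_⟩
    have hcancel : ∀ m : ℕ, s⁻¹ ^ m * s ^ m = 1 := fun m => by
      rw [← ENNReal.inv_pow, ENNReal.inv_mul_cancel (pow_ne_zero m hs₀) (pow_ne_top hs_top)]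
    have hweight : ∀ m : ℕ, s⁻¹ ^ m * (a m * s ^ m) = a m := fun m => by
      rw [mul_left_comm, hcancel, mul_one]
    have hpow : ∀ m : ℕ, s⁻¹ ^ m * (a m * s ^ m) ^ r = u ^ m * a m ^ r := fun m => by
      have hsm : (s ^ m) ^ r = u ^ m * s ^ m := by
        rw [← rpow_natCast_mul, show (m : ℝ) * r = (r - 1) * m + m by ring,
          rpow_add _ _ hs₀ hs_top, rpow_mul_natCast, rpow_inv_rpow hr₁'.ne', rpow_natCast]
      calc s⁻¹ ^ m * (a m * s ^ m) ^ r = u ^ m * a m ^ r * (s⁻¹ ^ m * s ^ m) := by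
            rw [mul_rpow_of_nonneg _ _ hr.le, hsm]; ring
        _ = u ^ m * a m ^ r := by rw [hcancel, mul_one]
    simpa only [hweight, hpow] using rpow_tsum_mul_le (fun m => s⁻¹ ^ m) (fun m => a m * s ^ m)
      hr₁.le

lemma tsum_pow_mul_tsum_shift_le {z : ℝ≥0∞} (hz₀ : z ≠ 0) (hz : z ≠ ⊤) (c y : ℕ → ℝ≥0∞) :
    ∑' k : ℕ, z ^ k * ∑' m : ℕ, c m * y (k + m) ≤
      (∑' m : ℕ, c m * z⁻¹ ^ m) * ∑' n : ℕ, z ^ n * y n := by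
  have hzpow : ∀ m k : ℕ, z ^ k = z⁻¹ ^ m * z ^ (m + k) := fun m k => by
    rw [pow_add, ← mul_assoc, ← mul_pow, ENNReal.inv_mul_cancel hz₀ hz, one_pow, one_mul]
  calc ∑' k : ℕ, z ^ k * ∑' m : ℕ, c m * y (k + m)
      = ∑' m : ℕ, c m * z⁻¹ ^ m * ∑' k : ℕ, z ^ (m + k) * y (m + k) := by
        simp_rw [← ENNReal.tsum_mul_left]
        rw [ENNReal.tsum_comm]
        refine tsum_congr fun m => tsum_congr fun k => ?_
        rw [hzpow m k, add_comm k m]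
        ring
    _ ≤ (∑' m : ℕ, c m * z⁻¹ ^ m) * ∑' n : ℕ, z ^ n * y n := by
        rw [← ENNReal.tsum_mul_right]
        exact ENNReal.tsum_le_tsum fun m => mul_le_mul_right
          (tsum_comp_le_tsum_of_injective (add_right_injective m) fun n => z ^ n * y n) _

end ENNReal

/-- Discrete Hardy inequality: for `r > 0` and `z > 1` there is a constant
`C = C(r,z)` such that for every positive sequence `x`,
`∑_k z^k (∑_{m=k}^∞ x_m)^r ≤ C ∑_k z^k x_k^r`. -/
theorem discrete_hardy (r : ℝ) (z : ℝ≥0∞) (hr : 0 < r) (hz : 1 < z) (hz' : z ≠ ⊤) :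
    ∃ C : ℝ≥0∞, C ≠ ⊤ ∧ ∀ x : ℕ → ℝ≥0∞, (∀ k, 0 < x k) →
      ∑' k : ℕ, z ^ k * (∑' m : ℕ, x (k + m)) ^ r ≤ C * ∑' k : ℕ, z ^ k * (x k) ^ r := by
  obtain ⟨u, hu₁, huz⟩ := exists_between hz
  obtain ⟨A, hA, hA_le⟩ :=
    ENNReal.exists_rpow_tsum_le_mul_tsum_pow_mul_rpow hr hu₁ (huz.trans_le le_top).ne
  have hz₀ : z ≠ 0 := (zero_lt_one.trans hz).ne'
  have hgeom : ∑' m : ℕ, u ^ m * z⁻¹ ^ m = ∑' m : ℕ, (u / z) ^ m := by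
    simp_rw [div_eq_mul_inv, mul_pow]
  have huz_lt : u / z < 1 := ENNReal.div_lt_of_lt_mul (by rwa [one_mul])
  refine ⟨A * ∑' m : ℕ, (u / z) ^ m,
    ENNReal.mul_ne_top hA (tsum_geometric_lt_top.2 huz_lt).ne, fun x _ => ?_⟩
  calc ∑' k : ℕ, z ^ k * (∑' m : ℕ, x (k + m)) ^ r
      ≤ ∑' k : ℕ, z ^ k * (A * ∑' m : ℕ, u ^ m * x (k + m) ^ r) := by
        gcongr with k
        exact hA_le fun m => x (k + m)
    _ = A * ∑' k : ℕ, z ^ k * ∑' m : ℕ, u ^ m * x (k + m) ^ r := by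
        simp_rw [mul_left_comm _ A, ENNReal.tsum_mul_left]
    _ ≤ A * ((∑' m : ℕ, u ^ m * z⁻¹ ^ m) * ∑' k : ℕ, z ^ k * (x k) ^ r) := by
        gcongr
        exact ENNReal.tsum_pow_mul_tsum_shift_le hz₀ hz' _ fun n => x n ^ r
    _ = (A * ∑' m : ℕ, (u / z) ^ m) * ∑' k : ℕ, z ^ k * (x k) ^ r := by
        rw [hgeom, mul_assoc]
end

section
/- Let X be a set and Cap an outer capacity on subsets of X, i.e., a monotone, countably subadditive set function with Cap(∅) = 0. Suppose ν is a nonnegative measure on X such that ν(E) ≤ C · Cap(E)^{q/p} for all sets E ⊂ X, where 1 ≤ p ≤ q < ∞. If u : X → ℝ is measurable and satisfies the strong capacitary inequality ∫_0^∞ Cap({x : |u(x)| > t}) d(t^p) ≤ A^p, then ∫_X |u|^q dν ≤ C' (A^p)^{q/p} for a constant C' depending only on p, q, C. -/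
open MeasureTheory Set
open scoped ENNReal NNReal

lemma aux_tsum_rpow {ι : Type*} (a : ι → ℝ≥0∞) {r : ℝ} (hr : 1 ≤ r) :
    ∑' i, a i ^ r ≤ (∑' i, a i) ^ r := by
  have hr0 : 0 < r := lt_of_lt_of_le one_pos hr
  set S := ∑' i, a i with hS
  rcases eq_or_ne S ∞ with hStop | hStop
  · rw [hStop, ENNReal.top_rpow_of_pos hr0]; exact le_top
  rcases eq_or_ne S 0 with hS0 | hS0
  · have : ∀ i, a i = 0 := by
      intro i
      have := ENNReal.le_tsum (f := a) i
      rw [← hS, hS0] at this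
      exact le_antisymm this bot_le
    simp [this, ENNReal.zero_rpow_of_pos hr0]
  have key : ∀ i, a i ^ r ≤ a i * S ^ (r - 1) := by
    intro i
    rcases eq_or_ne (a i) 0 with h0 | h0
    · simp [h0, ENNReal.zero_rpow_of_pos hr0]
    have hitop : a i ≠ ∞ := fun h => hStop (top_le_iff.mp (h ▸ ENNReal.le_tsum i))
    calc a i ^ r = a i ^ (1 + (r - 1)) := by ring_nf
      _ = a i ^ (1:ℝ) * a i ^ (r - 1) := ENNReal.rpow_add _ _ h0 hitop
      _ ≤ a i * S ^ (r - 1) := by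
          rw [ENNReal.rpow_one]
          exact mul_le_mul_right (ENNReal.rpow_le_rpow (ENNReal.le_tsum i) (by linarith)) _
  calc ∑' i, a i ^ r ≤ ∑' i, a i * S ^ (r - 1) := ENNReal.tsum_le_tsum key
    _ = S * S ^ (r - 1) := by rw [ENNReal.tsum_mul_right]
    _ = S ^ (1:ℝ) * S ^ (r - 1) := by rw [ENNReal.rpow_one]
    _ = S ^ r := by rw [← ENNReal.rpow_add _ _ hS0 hStop]; ring_nf

lemma aux_lintegral_pow_Ioc {p : ℝ} (hp : 1 ≤ p) {a b : ℝ} (ha : 0 < a) (hab : a ≤ b) :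
    ∫⁻ t in Ioc a b, ENNReal.ofReal (p * t ^ (p - 1)) = ENNReal.ofReal (b ^ p - a ^ p) := by
  have hp0 : 0 < p := lt_of_lt_of_le one_pos hp
  have hcont : Continuous fun t : ℝ => p * t ^ (p - 1) := by
    refine continuous_const.mul ?_
    exact continuous_iff_continuousAt.2 fun x =>
      Real.continuousAt_rpow_const x _ (Or.inr (by linarith))
  have hint : IntegrableOn (fun t : ℝ => p * t ^ (p - 1)) (Ioc a b) :=
    hcont.integrableOn_Ioc
  have hnonneg : 0 ≤ᵐ[volume.restrict (Ioc a b)] fun t : ℝ => p * t ^ (p - 1) := by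
    rw [Filter.EventuallyLE, ae_restrict_iff' measurableSet_Ioc]
    filter_upwards with t ht
    have : 0 < t := lt_of_lt_of_le ha ht.1.le
    positivity
  rw [← MeasureTheory.ofReal_integral_eq_lintegral_ofReal hint hnonneg]
  congr 1
  rw [← intervalIntegral.integral_of_le hab, intervalIntegral.integral_const_mul,
    integral_rpow (Or.inl (by linarith))]
  have : p - 1 + 1 = p := by ring
  rw [this]
  field_simp

/-- Trace inequality from a strong capacitary inequality: if `Cap` is a monotone,
countably subadditive capacity with `Cap ∅ = 0`, `ν(E) ≤ C · Cap(E)^{q/p}` for all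
sets `E`, and `u` satisfies `∫_0^∞ Cap({|u| > t}) d(t^p) ≤ A^p`, then
`∫ |u|^q dν ≤ C' (A^p)^{q/p}` with `C'` depending only on `p, q, C`. -/
theorem trace_from_strong_capacitary (p q : ℝ) (C : ℝ≥0) (hp : 1 ≤ p) (hpq : p ≤ q) :
    ∃ C' : ℝ≥0, ∀ (X : Type) (_ : MeasurableSpace X) (ν : Measure X)
      (Cap : Set X → ℝ≥0∞) (u : X → ℝ) (A : ℝ≥0∞),
      Monotone Cap → Cap ∅ = 0 →
      (∀ E : ℕ → Set X, Cap (⋃ j, E j) ≤ ∑' j, Cap (E j)) →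
      (∀ E : Set X, ν E ≤ (C : ℝ≥0∞) * Cap E ^ (q / p)) →
      Measurable u →
      (∫⁻ t in Ioi (0 : ℝ), ENNReal.ofReal (p * t ^ (p - 1)) * Cap {x | t < |u x|}) ≤ A ^ p →
      ∫⁻ x, ENNReal.ofReal |u x| ^ q ∂ν ≤ (C' : ℝ≥0∞) * (A ^ p) ^ (q / p) := by
  have hp0 : 0 < p := lt_of_lt_of_le one_pos hp
  have hq0 : 0 < q := lt_of_lt_of_le hp0 hpq
  have hr1 : 1 ≤ q / p := (one_le_div hp0).2 hpq
  have hr0 : 0 < q / p := lt_of_lt_of_le one_pos hr1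
  refine ⟨(C + 1) * (2 : ℝ≥0) ^ q * (2 : ℝ≥0) ^ q, ?_⟩
  intro X mX ν Cap u A hmono hemp hsub hcomp hu hA
  set c : ℤ → ℝ := fun k => (2 : ℝ) ^ k with hc_def
  have hcpos : ∀ k : ℤ, 0 < c k := fun k => by positivity
  have hcmono : Monotone c := fun m n hmn => zpow_le_zpow_right₀ (by norm_num) hmn
  set F : ℝ → ℝ≥0∞ := fun t => Cap {x | t < |u x|} with hF_def
  have hFanti : Antitone F := fun s t hst =>
    hmono (fun x hx => lt_of_le_of_lt hst hx)
  set a : ℤ → ℝ≥0∞ := fun k => ENNReal.ofReal (c k) ^ p * F (c k) with ha_def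
  have hmeas_w : Measurable fun t : ℝ => ENNReal.ofReal (p * t ^ (p - 1)) := by
    have hcont : Continuous fun t : ℝ => p * t ^ (p - 1) := by
      refine continuous_const.mul ?_
      exact continuous_iff_continuousAt.2 fun x =>
        Real.continuousAt_rpow_const x _ (Or.inr (by linarith))
    exact hcont.measurable.ennreal_ofReal
  -- Step A : ∑ a k ≤ 2 * A ^ p
  have hterm : ∀ k : ℤ, a k ≤
      2 * ∫⁻ t in Ioc (c (k - 1)) (c k), ENNReal.ofReal (p * t ^ (p - 1)) * F t := by
    intro k
    have hb : 0 < c k := hcpos k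
    have hhalf : c (k - 1) = c k / 2 := by
      simp only [hc_def]
      rw [zpow_sub₀ (two_ne_zero), zpow_one]
    have hK : ∫⁻ t in Ioc (c (k - 1)) (c k), ENNReal.ofReal (p * t ^ (p - 1)) =
        ENNReal.ofReal (c k ^ p - c (k - 1) ^ p) :=
      aux_lintegral_pow_Ioc hp (hcpos (k - 1)) (hcmono (by omega))
    have hlow : (∫⁻ t in Ioc (c (k - 1)) (c k), ENNReal.ofReal (p * t ^ (p - 1))) * F (c k) ≤
        ∫⁻ t in Ioc (c (k - 1)) (c k), ENNReal.ofReal (p * t ^ (p - 1)) * F t := by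
      rw [← lintegral_mul_const _ hmeas_w]
      exact setLIntegral_mono' measurableSet_Ioc fun t ht => mul_le_mul_right (hFanti ht.2) _
    have hhalfpow : (c (k - 1)) ^ p ≤ c k ^ p / 2 := by
      rw [hhalf, Real.div_rpow hb.le (by norm_num)]
      have h2p : (2 : ℝ) ≤ (2 : ℝ) ^ p := by
        calc (2 : ℝ) = 2 ^ (1 : ℝ) := (Real.rpow_one 2).symm
          _ ≤ 2 ^ p := Real.rpow_le_rpow_of_exponent_le (by norm_num) hp
      exact div_le_div_of_nonneg_left (Real.rpow_nonneg hb.le p) (by norm_num) h2p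
    have h1 : ENNReal.ofReal (c k ^ p) ≤ 2 * ENNReal.ofReal (c k ^ p - c (k - 1) ^ p) := by
      rw [show (2 : ℝ≥0∞) = ENNReal.ofReal 2 by simp,
        ← ENNReal.ofReal_mul (by norm_num : (0:ℝ) ≤ 2)]
      exact ENNReal.ofReal_le_ofReal (by linarith)
    calc a k = ENNReal.ofReal (c k ^ p) * F (c k) := by
          simp only [ha_def, ENNReal.ofReal_rpow_of_pos hb]
      _ ≤ (2 * ENNReal.ofReal (c k ^ p - c (k - 1) ^ p)) * F (c k) :=
          mul_le_mul_left h1 _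
      _ = 2 * ((∫⁻ t in Ioc (c (k - 1)) (c k), ENNReal.ofReal (p * t ^ (p - 1))) * F (c k)) := by
          rw [hK, mul_assoc]
      _ ≤ 2 * ∫⁻ t in Ioc (c (k - 1)) (c k), ENNReal.ofReal (p * t ^ (p - 1)) * F t :=
          mul_le_mul_right hlow _
  have hdisj : Pairwise (Function.onFun Disjoint fun k : ℤ => Ioc (c (k - 1)) (c k)) := by
    intro i j hij
    rcases hij.lt_or_gt with h | h
    · exact Ioc_disjoint_Ioc.2 (le_trans (min_le_left _ _)
        (le_trans (hcmono (by omega)) (le_max_right _ _)))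
    · exact Ioc_disjoint_Ioc.2 (le_trans (min_le_right _ _)
        (le_trans (hcmono (by omega)) (le_max_left _ _)))
  have hsubIoi : (⋃ k : ℤ, Ioc (c (k - 1)) (c k)) ⊆ Ioi (0 : ℝ) := by
    intro t ht
    obtain ⟨k, hk⟩ := mem_iUnion.mp ht
    exact lt_trans (hcpos (k - 1)) hk.1
  have stepA : ∑' k : ℤ, a k ≤ 2 * A ^ p := by
    calc ∑' k : ℤ, a k
        ≤ ∑' k : ℤ, 2 * ∫⁻ t in Ioc (c (k - 1)) (c k), ENNReal.ofReal (p * t ^ (p - 1)) * F t :=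
          ENNReal.tsum_le_tsum hterm
      _ = 2 * ∑' k : ℤ, ∫⁻ t in Ioc (c (k - 1)) (c k), ENNReal.ofReal (p * t ^ (p - 1)) * F t :=
          ENNReal.tsum_mul_left
      _ = 2 * ∫⁻ t in ⋃ k : ℤ, Ioc (c (k - 1)) (c k), ENNReal.ofReal (p * t ^ (p - 1)) * F t := by
          rw [lintegral_iUnion (fun _ => measurableSet_Ioc) hdisj]
      _ ≤ 2 * ∫⁻ t in Ioi (0:ℝ), ENNReal.ofReal (p * t ^ (p - 1)) * F t :=
          mul_le_mul_right (lintegral_mono_set hsubIoi) 2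
      _ ≤ 2 * A ^ p := mul_le_mul_right hA 2
  -- Step B : the integral is bounded by the dyadic sum
  set S : ℤ → Set X := fun k => {x | c k < |u x|} ∩ {x | |u x| ≤ c (k + 1)} with hS_def
  have hSmeas : ∀ k, MeasurableSet (S k) := fun k =>
    (measurableSet_lt measurable_const hu.abs).inter (measurableSet_le hu.abs measurable_const)
  have hg : ∀ x, ENNReal.ofReal |u x| ^ q = (⋃ k : ℤ, S k).indicator
      (fun x => ENNReal.ofReal |u x| ^ q) x := by
    intro x
    by_cases hx : x ∈ ⋃ k : ℤ, S k
    · rw [indicator_of_mem hx]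
    · rw [indicator_of_notMem hx]
      have hux : ¬ (0 < |u x|) := by
        intro h
        obtain ⟨n, hn⟩ := exists_mem_Ioc_zpow h one_lt_two
        exact hx (mem_iUnion.2 ⟨n, hn.1, hn.2⟩)
      have h0 : |u x| = 0 := le_antisymm (not_lt.mp hux) (abs_nonneg _)
      simp [h0, ENNReal.zero_rpow_of_pos hq0]
  have hppq : p * (q / p) = q := by field_simp
  have hterm2 : ∀ k : ℤ, ENNReal.ofReal (c (k + 1)) ^ q * ((C : ℝ≥0∞) * F (c k) ^ (q / p)) =
      (2 : ℝ≥0∞) ^ q * (C : ℝ≥0∞) * a k ^ (q / p) := by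
    intro k
    have hck1 : c (k + 1) = c k * 2 := by
      simp only [hc_def]; rw [zpow_add_one₀ (two_ne_zero)]
    rw [hck1, ENNReal.ofReal_mul (hcpos k).le]
    have : ENNReal.ofReal (2 : ℝ) = (2 : ℝ≥0∞) := by simp
    rw [this, ENNReal.mul_rpow_of_nonneg _ _ hq0.le]
    simp only [ha_def]
    rw [ENNReal.mul_rpow_of_nonneg _ _ hr0.le, ← ENNReal.rpow_mul, hppq]
    ring
  have stepB : ∫⁻ x, ENNReal.ofReal |u x| ^ q ∂ν ≤
      (2 : ℝ≥0∞) ^ q * (C : ℝ≥0∞) * ∑' k : ℤ, a k ^ (q / p) := by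
    calc ∫⁻ x, ENNReal.ofReal |u x| ^ q ∂ν
        = ∫⁻ x, (⋃ k : ℤ, S k).indicator (fun x => ENNReal.ofReal |u x| ^ q) x ∂ν :=
          lintegral_congr hg
      _ = ∫⁻ x in ⋃ k : ℤ, S k, ENNReal.ofReal |u x| ^ q ∂ν :=
          lintegral_indicator (MeasurableSet.iUnion hSmeas) _
      _ ≤ ∑' k : ℤ, ∫⁻ x in S k, ENNReal.ofReal |u x| ^ q ∂ν := lintegral_iUnion_le _ _
      _ ≤ ∑' k : ℤ, ENNReal.ofReal (c (k + 1)) ^ q * ((C : ℝ≥0∞) * F (c k) ^ (q / p)) := by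
          refine ENNReal.tsum_le_tsum fun k => ?_
          calc ∫⁻ x in S k, ENNReal.ofReal |u x| ^ q ∂ν
              ≤ ∫⁻ _ in S k, ENNReal.ofReal (c (k + 1)) ^ q ∂ν := by
                refine setLIntegral_mono' (hSmeas k) fun x hx => ?_
                exact ENNReal.rpow_le_rpow (ENNReal.ofReal_le_ofReal hx.2) hq0.le
            _ = ENNReal.ofReal (c (k + 1)) ^ q * ν (S k) := setLIntegral_const _ _
            _ ≤ ENNReal.ofReal (c (k + 1)) ^ q * ν {x | c k < |u x|} :=
                mul_le_mul_right (measure_mono inter_subset_left) _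
            _ ≤ ENNReal.ofReal (c (k + 1)) ^ q * ((C : ℝ≥0∞) * F (c k) ^ (q / p)) :=
                mul_le_mul_right (hcomp _) _
      _ = ∑' k : ℤ, (2 : ℝ≥0∞) ^ q * (C : ℝ≥0∞) * a k ^ (q / p) := tsum_congr hterm2
      _ = (2 : ℝ≥0∞) ^ q * (C : ℝ≥0∞) * ∑' k : ℤ, a k ^ (q / p) := ENNReal.tsum_mul_left
  -- Step C : combine
  have stepC : ∑' k : ℤ, a k ^ (q / p) ≤ (2 : ℝ≥0∞) ^ q * (A ^ p) ^ (q / p) := by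
    calc ∑' k : ℤ, a k ^ (q / p) ≤ (∑' k : ℤ, a k) ^ (q / p) := aux_tsum_rpow a hr1
      _ ≤ (2 * A ^ p) ^ (q / p) := ENNReal.rpow_le_rpow stepA hr0.le
      _ = (2 : ℝ≥0∞) ^ (q / p) * (A ^ p) ^ (q / p) := ENNReal.mul_rpow_of_nonneg _ _ hr0.le
      _ ≤ (2 : ℝ≥0∞) ^ q * (A ^ p) ^ (q / p) :=
          mul_le_mul_left (ENNReal.rpow_le_rpow_of_exponent_le one_le_two
            (div_le_self hq0.le hp)) _
  have hcoe : (((C + 1) * (2 : ℝ≥0) ^ q * (2 : ℝ≥0) ^ q : ℝ≥0) : ℝ≥0∞) =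
      ((C : ℝ≥0∞) + 1) * (2 : ℝ≥0∞) ^ q * (2 : ℝ≥0∞) ^ q := by
    push_cast [ENNReal.coe_rpow_of_ne_zero (two_ne_zero)]
    norm_num
  calc ∫⁻ x, ENNReal.ofReal |u x| ^ q ∂ν
      ≤ (2 : ℝ≥0∞) ^ q * (C : ℝ≥0∞) * ∑' k : ℤ, a k ^ (q / p) := stepB
    _ ≤ (2 : ℝ≥0∞) ^ q * (C : ℝ≥0∞) * ((2 : ℝ≥0∞) ^ q * (A ^ p) ^ (q / p)) :=
        mul_le_mul_right stepC _
    _ = (C : ℝ≥0∞) * (2 : ℝ≥0∞) ^ q * (2 : ℝ≥0∞) ^ q * (A ^ p) ^ (q / p) := by ring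
    _ ≤ ((C : ℝ≥0∞) + 1) * (2 : ℝ≥0∞) ^ q * (2 : ℝ≥0∞) ^ q * (A ^ p) ^ (q / p) := by
        gcongr
        exact le_self_add
    _ = (((C + 1) * (2 : ℝ≥0) ^ q * (2 : ℝ≥0) ^ q : ℝ≥0) : ℝ≥0∞) * (A ^ p) ^ (q / p) := by
        rw [hcoe]
end

section
/- Gaussian subordination lower bound: for 0 < σ < 1, Q ≥ 1, t > 0 and d ≥ 0, ∫_0^1 e^{-r} r^{σ-1} t^{-Q} r^{Q/2} exp(-c · d² · 4r/t²) dr ≥ C · t^{2σ}/(t² + d²)^{Q/2+σ}, with C > 0 depending only on Q, σ, c. -/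
open MeasureTheory Set Real

/-- Gaussian subordination lower bound: for `0 < σ < 1`, `Q ≥ 1` and fixed `c > 0`,
there is `C = C(Q,σ,c) > 0` such that for all `t > 0` and `d ≥ 0`,
`∫_0^1 e^{-r} r^{σ-1} t^{-Q} r^{Q/2} e^{-c d² 4r/t²} dr ≥ C t^{2σ}/(t² + d²)^{Q/2+σ}`. -/
theorem gaussian_subordination_lower (Q σ c : ℝ) (hQ : 1 ≤ Q) (hσ0 : 0 < σ)
    (hσ1 : σ < 1) (hc : 0 < c) :
    ∃ C : ℝ, 0 < C ∧ ∀ t d : ℝ, 0 < t → 0 ≤ d →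
      C * (t ^ (2 * σ) / (t ^ 2 + d ^ 2) ^ (Q / 2 + σ))
        ≤ ∫ r in Ioc (0 : ℝ) 1, Real.exp (-r) * r ^ (σ - 1) * t ^ (-Q) * r ^ (Q / 2)
            * Real.exp (-(c * d ^ 2 * (4 * r) / t ^ 2)) := by
  have hQ0 : 0 < Q := lt_of_lt_of_le one_pos hQ
  set s : ℝ := Q / 2 + σ with hs_def
  have hs : 0 < s := by positivity
  set M : ℝ := max 1 (4 * c) with hM_def
  have hM1 : (1 : ℝ) ≤ M := le_max_left _ _
  have hM0 : (0 : ℝ) < M := lt_of_lt_of_le one_pos hM1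
  refine ⟨Real.exp (-2) / (s * M ^ s), by positivity, ?_⟩
  intro t d ht hd
  set A : ℝ := 1 + 4 * c * d ^ 2 / t ^ 2 with hA_def
  have hA1 : (1 : ℝ) ≤ A := le_add_of_nonneg_right (by positivity)
  have hA0 : (0 : ℝ) < A := lt_of_lt_of_le one_pos hA1
  set b : ℝ := A⁻¹ with hb_def
  have hb0 : 0 < b := by positivity
  have hb1 : b ≤ 1 := by
    rw [hb_def]; exact inv_le_one_of_one_le₀ hA1
  set f : ℝ → ℝ := fun r => Real.exp (-r) * r ^ (σ - 1) * t ^ (-Q) * r ^ (Q / 2)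
      * Real.exp (-(c * d ^ 2 * (4 * r) / t ^ 2)) with hf_def
  -- integrability of the full integrand
  have hmeas : AEStronglyMeasurable f (volume.restrict (Ioc (0:ℝ) 1)) := by
    apply Measurable.aestronglyMeasurable
    fun_prop
  have hrpow_int : ∀ u : ℝ, 0 < u → IntegrableOn (fun r : ℝ => r ^ (s - 1)) (Ioc 0 u) := by
    intro u hu
    rw [← intervalIntegrable_iff_integrableOn_Ioc_of_le hu.le]
    exact intervalIntegral.intervalIntegrable_rpow' (by linarith)
  have hgi : IntegrableOn (fun r : ℝ => t ^ (-Q) * r ^ (s - 1)) (Ioc 0 1) :=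
    ((hrpow_int 1 one_pos).const_mul _)
  have hfi : IntegrableOn f (Ioc 0 1) := by
    refine Integrable.mono hgi hmeas ?_
    filter_upwards [ae_restrict_mem measurableSet_Ioc] with r hr
    have hr0 : (0 : ℝ) < r := hr.1
    have h1 : Real.exp (-r) ≤ 1 := Real.exp_le_one_iff.mpr (by linarith)
    have h2 : Real.exp (-(c * d ^ 2 * (4 * r) / t ^ 2)) ≤ 1 :=
      Real.exp_le_one_iff.mpr (neg_nonpos.mpr (by positivity))
    have hfr : f r ≤ t ^ (-Q) * r ^ (s - 1) := by
      have hrr : r ^ (σ - 1) * r ^ (Q / 2) = r ^ (s - 1) := by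
        rw [← Real.rpow_add hr0]; congr 1; rw [hs_def]; ring
      calc f r ≤ 1 * r ^ (σ - 1) * t ^ (-Q) * r ^ (Q / 2) * 1 := by
            simp only [hf_def]; gcongr <;> positivity
        _ = t ^ (-Q) * (r ^ (σ - 1) * r ^ (Q / 2)) := by ring
        _ = t ^ (-Q) * r ^ (s - 1) := by rw [hrr]
    have hf0 : 0 ≤ f r := by rw [hf_def]; positivity
    rw [norm_of_nonneg hf0, norm_of_nonneg (by positivity)]
    exact hfr
  have hfi' : IntegrableOn f (Ioc 0 b) := hfi.mono_set (Ioc_subset_Ioc_right hb1)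
  have hgi' : IntegrableOn (fun r : ℝ => Real.exp (-2) * t ^ (-Q) * r ^ (s - 1)) (Ioc 0 b) :=
    ((hrpow_int b hb0).const_mul _)
  -- step 1 : restrict to the smaller interval
  have hstep1 : ∫ r in Ioc (0:ℝ) b, f r ≤ ∫ r in Ioc (0:ℝ) 1, f r := by
    refine setIntegral_mono_set hfi ?_ ((Ioc_subset_Ioc_right hb1).eventuallyLE)
    filter_upwards [ae_restrict_mem measurableSet_Ioc] with r hr
    have hr0 : (0:ℝ) ≤ r := hr.1.le
    simp only [hf_def]
    positivity
  -- step 2 : pointwise lower bound on the small interval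
  have hstep2 : ∫ r in Ioc (0:ℝ) b, Real.exp (-2) * t ^ (-Q) * r ^ (s - 1)
      ≤ ∫ r in Ioc (0:ℝ) b, f r := by
    refine setIntegral_mono_on hgi' hfi' measurableSet_Ioc ?_
    intro r hr
    have hr0 : (0 : ℝ) < r := hr.1
    have hrb : r ≤ b := hr.2
    have hr1 : r ≤ 1 := hrb.trans hb1
    have hx : c * d ^ 2 * (4 * r) / t ^ 2 ≤ 1 := by
      rw [div_le_one (by positivity)]
      have h1 : c * d ^ 2 * (4 * r) = (4 * c * d ^ 2) * r := by ring
      have h2 : (4 * c * d ^ 2) * r ≤ (4 * c * d ^ 2) * b :=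
        mul_le_mul_of_nonneg_left hrb (by positivity)
      have h3 : (4 * c * d ^ 2) * b ≤ t ^ 2 := by
        rw [hb_def, ← div_eq_mul_inv, div_le_iff₀ hA0]
        have hAeq : t ^ 2 * A = t ^ 2 + 4 * c * d ^ 2 := by
          rw [hA_def]; field_simp
        rw [hAeq]; nlinarith [sq_nonneg t]
      linarith
    have hrr : r ^ (σ - 1) * r ^ (Q / 2) = r ^ (s - 1) := by
      rw [← Real.rpow_add hr0]; congr 1; rw [hs_def]; ring
    have he1 : Real.exp (-1) ≤ Real.exp (-r) := Real.exp_le_exp.mpr (by linarith)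
    have he2 : Real.exp (-1) ≤ Real.exp (-(c * d ^ 2 * (4 * r) / t ^ 2)) :=
      Real.exp_le_exp.mpr (by linarith)
    have hsplit : Real.exp (-2 : ℝ) = Real.exp (-1) * Real.exp (-1) := by
      rw [← Real.exp_add]; norm_num
    calc Real.exp (-2) * t ^ (-Q) * r ^ (s - 1)
        = (Real.exp (-1) * Real.exp (-1)) * (t ^ (-Q) * r ^ (s - 1)) := by
          rw [← hsplit]; ring
      _ ≤ (Real.exp (-r) * Real.exp (-(c * d ^ 2 * (4 * r) / t ^ 2)))
            * (t ^ (-Q) * r ^ (s - 1)) := by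
          gcongr <;> positivity
      _ = f r := by rw [hf_def, ← hrr]; ring
  -- step 3 : compute the lower integral
  have hstep3 : ∫ r in Ioc (0:ℝ) b, Real.exp (-2) * t ^ (-Q) * r ^ (s - 1)
      = Real.exp (-2) * t ^ (-Q) * (b ^ s / s) := by
    rw [show (fun r : ℝ => Real.exp (-2) * t ^ (-Q) * r ^ (s - 1))
        = fun r : ℝ => (Real.exp (-2) * t ^ (-Q)) * r ^ (s - 1) from rfl,
      MeasureTheory.integral_const_mul]
    congr 1
    rw [← intervalIntegral.integral_of_le hb0.le,
      integral_rpow (Or.inl (by linarith : (-1:ℝ) < s - 1))]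
    have h1 : s - 1 + 1 = s := by ring
    rw [h1, Real.zero_rpow (ne_of_gt hs), sub_zero]
  -- step 4 : arithmetic lower bound for the computed integral
  have hB : (0 : ℝ) < t ^ 2 + d ^ 2 := by positivity
  have hAle : A ≤ M * (t ^ 2 + d ^ 2) / t ^ 2 := by
    have heq : M * (t ^ 2 + d ^ 2) / t ^ 2 = M + M * d ^ 2 / t ^ 2 := by
      field_simp
    rw [heq, hA_def]
    have h4c : 4 * c ≤ M := le_max_right _ _
    have : 4 * c * d ^ 2 / t ^ 2 ≤ M * d ^ 2 / t ^ 2 := by gcongr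
    linarith
  have hMB0 : (0 : ℝ) < M * (t ^ 2 + d ^ 2) / t ^ 2 := by positivity
  have hbs : (t ^ 2) ^ s / (M ^ s * (t ^ 2 + d ^ 2) ^ s) ≤ b ^ s := by
    have hinv : (M * (t ^ 2 + d ^ 2) / t ^ 2)⁻¹ ≤ b := by
      rw [hb_def]; exact inv_anti₀ hA0 hAle
    calc (t ^ 2) ^ s / (M ^ s * (t ^ 2 + d ^ 2) ^ s)
        = ((M * (t ^ 2 + d ^ 2) / t ^ 2)⁻¹) ^ s := by
          rw [inv_rpow hMB0.le, Real.div_rpow (by positivity) (by positivity),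
            Real.mul_rpow hM0.le hB.le, inv_div]
      _ ≤ b ^ s := Real.rpow_le_rpow (by positivity) hinv hs.le
  have hpow : t ^ (-Q) * (t ^ 2) ^ s = t ^ (2 * σ) := by
    have h2 : ((t ^ 2 : ℝ)) ^ s = t ^ (2 * s) := by
      rw [← Real.rpow_natCast t 2, ← Real.rpow_mul ht.le]
      norm_num
    rw [h2, ← Real.rpow_add ht]
    congr 1
    rw [hs_def]; ring
  have hstep4 : Real.exp (-2) / (s * M ^ s) * (t ^ (2 * σ) / (t ^ 2 + d ^ 2) ^ s)
      ≤ Real.exp (-2) * t ^ (-Q) * (b ^ s / s) := by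
    have hMs : (0 : ℝ) < M ^ s := by positivity
    have hBs : (0 : ℝ) < (t ^ 2 + d ^ 2) ^ s := by positivity
    have hlhs : Real.exp (-2) / (s * M ^ s) * (t ^ (2 * σ) / (t ^ 2 + d ^ 2) ^ s)
        = Real.exp (-2) * t ^ (-Q)
          * (((t ^ 2) ^ s / (M ^ s * (t ^ 2 + d ^ 2) ^ s)) / s) := by
      rw [← hpow]
      field_simp
    rw [hlhs]
    gcongr
  calc Real.exp (-2) / (s * M ^ s) * (t ^ (2 * σ) / (t ^ 2 + d ^ 2) ^ s)
      ≤ Real.exp (-2) * t ^ (-Q) * (b ^ s / s) := hstep4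
    _ = ∫ r in Ioc (0:ℝ) b, Real.exp (-2) * t ^ (-Q) * r ^ (s - 1) := hstep3.symm
    _ ≤ ∫ r in Ioc (0:ℝ) b, f r := hstep2
    _ ≤ ∫ r in Ioc (0:ℝ) 1, f r := hstep1
end
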